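/- arXiv:1811.11223 — 3 statements merged into one kernel-verified Lean document; each statement's English description precedes it below -/
import Mathlib

section
/- If S is a regular partial difference set in a finite group G, then the complement S^c = G \ (S ∪ {1}) is also a regular partial difference set in G, with parameters (v, v−k−1, v−2k+μ−2, v−2k+λ). -/
/-- `S` is a `(v,k,λ,μ)` partial difference set in the finite group `G`:
the multiset of differences `s₁s₂⁻¹` contains each nonidentity `g` exactly
`λ` times if `g ∈ S` and `μ` times otherwise. -/
def IsPDS {G : Type*} [Group G] [Fintype G] [DecidableEq G] (S : Finset G)
    (v k : ℕ) (l m : ℤ) : Prop :=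
  Fintype.card G = v ∧ S.card = k ∧
  ∀ g : G, g ≠ 1 →
    ((((S ×ˢ S).filter (fun p => p.1 * p.2⁻¹ = g)).card : ℤ) = if g ∈ S then l else m)

/-- Pairs `(a,b)` with `a b⁻¹ = g` correspond to `b` with `g b ∈ X` and `b ∈ X`. -/
lemma pair_count {G : Type*} [Group G] [Fintype G] [DecidableEq G] (X : Finset G) (g : G) :
    ((X ×ˢ X).filter (fun p => p.1 * p.2⁻¹ = g)).card
      = (Finset.univ.filter (fun b => g * b ∈ X ∧ b ∈ X)).card := by
  apply Finset.card_bij' (fun p _ => p.2) (fun b _ => (g * b, b))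
  · intro p hp
    simp only [Finset.mem_filter, Finset.mem_product] at hp
    obtain ⟨⟨hp1, hp2⟩, hp3⟩ := hp
    have : p.1 = g * p.2 := by rw [← hp3]; group
    simp only [Finset.mem_filter, Finset.mem_univ, true_and]
    exact ⟨this ▸ hp1, hp2⟩
  · intro b hb
    simp only [Finset.mem_filter, Finset.mem_univ, true_and] at hb
    simp only [Finset.mem_filter, Finset.mem_product]
    refine ⟨⟨hb.1, hb.2⟩, by group⟩
  · intro p hp
    simp only [Finset.mem_filter, Finset.mem_product] at hp
    obtain ⟨⟨hp1, hp2⟩, hp3⟩ := hp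
    have : p.1 = g * p.2 := by rw [← hp3]; group
    exact Prod.ext this.symm rfl
  · intro b _; rfl

lemma shift_count {G : Type*} [Group G] [Fintype G] [DecidableEq G] (X : Finset G) (g : G) :
    (Finset.univ.filter (fun b => g * b ∈ X)).card = X.card := by
  apply Finset.card_bij' (fun b _ => g * b) (fun x _ => g⁻¹ * x)
  · intro b hb; simpa using hb
  · intro x hx; simp [hx]
  · intro b _; group
  · intro x _; group

/-- If `S` is a regular partial difference set in a finite group `G`, then the
complement `Sᶜ = G \ (S ∪ {1})` is also a regular partial difference set, with
parameters `(v, v−k−1, v−2k+μ−2, v−2k+λ)`. -/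
theorem pds_compl {G : Type*} [Group G] [Fintype G] [DecidableEq G]
    (S : Finset G) (v k : ℕ) (l m : ℤ)
    (hS : IsPDS S v k l m) (h1 : (1 : G) ∉ S) (hinv : ∀ s ∈ S, s⁻¹ ∈ S) :
    IsPDS (Finset.univ \ insert (1 : G) S) v (v - k - 1)
      ((v : ℤ) - 2 * k + m - 2) ((v : ℤ) - 2 * k + l) ∧
    (1 : G) ∉ Finset.univ \ insert (1 : G) S := by
  obtain ⟨hv, hk, hcount⟩ := hS
  have hinv' : ∀ s : G, s ∈ S ↔ s⁻¹ ∈ S :=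
    fun s => ⟨hinv s, fun h => by simpa using hinv _ h⟩
  set A : Finset G := insert (1 : G) S with hA
  set T : Finset G := Finset.univ \ A with hT
  have cardA : A.card = k + 1 := by rw [hA, Finset.card_insert_of_notMem h1, hk]
  have hvk : k + 1 ≤ v := by rw [← hv, ← cardA]; exact Finset.card_le_univ _
  have cardT : T.card = v - k - 1 := by
    rw [hT, Finset.card_sdiff_of_subset (Finset.subset_univ _), Finset.card_univ, hv, cardA,
      Nat.sub_sub]
  refine ⟨⟨hv, cardT, ?_⟩, by simp [hT, hA]⟩
  intro g hg
  -- key counting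
  rw [pair_count]
  have hTmem : ∀ b : G, b ∈ T ↔ ¬ b ∈ A := by intro b; simp [hT]
  -- complement filter
  have hfilt : (Finset.univ.filter (fun b => g * b ∈ T ∧ b ∈ T))
      = Finset.univ \ (Finset.univ.filter (fun b => g * b ∈ A ∨ b ∈ A)) := by
    rw [← Finset.filter_not]
    apply Finset.filter_congr
    intro b _
    simp only [hTmem, not_or]
  have hcard1 : (Finset.univ.filter (fun b => g * b ∈ T ∧ b ∈ T)).card
      = v - (Finset.univ.filter (fun b => g * b ∈ A ∨ b ∈ A)).card := by
    rw [hfilt, Finset.card_sdiff_of_subset (Finset.subset_univ _), Finset.card_univ, hv]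
  have hPQ : (Finset.univ.filter (fun b => g * b ∈ A ∨ b ∈ A)).card
        + (Finset.univ.filter (fun b => g * b ∈ A ∧ b ∈ A)).card
      = (k + 1) + (k + 1) := by
    rw [Finset.filter_or, Finset.filter_and, Finset.card_union_add_card_inter,
      shift_count, Finset.filter_mem_eq_inter, Finset.univ_inter, cardA]
  -- relate intersection count for A to that for S
  have hNA : (Finset.univ.filter (fun b => g * b ∈ A ∧ b ∈ A)).card
      = (Finset.univ.filter (fun b => g * b ∈ S ∧ b ∈ S)).card
        + (if g ∈ S then 2 else 0) := by
    by_cases hgS : g ∈ S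
    · have hginv : g⁻¹ ∈ S := hinv g hgS
      have hset : (Finset.univ.filter (fun b => g * b ∈ A ∧ b ∈ A))
          = insert (1 : G) (insert g⁻¹ (Finset.univ.filter (fun b => g * b ∈ S ∧ b ∈ S))) := by
        ext b
        simp only [Finset.mem_filter, Finset.mem_univ, true_and, Finset.mem_insert, hA]
        constructor
        · rintro ⟨hb1, hb2⟩
          by_cases hb : b = 1
          · exact Or.inl hb
          · by_cases hbg : b = g⁻¹
            · exact Or.inr (Or.inl hbg)
            · refine Or.inr (Or.inr ⟨?_, ?_⟩)
              · rcases hb1 with h | h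
                · exact absurd (inv_eq_of_mul_eq_one_right h).symm hbg
                · exact h
              · rcases hb2 with h | h
                · exact absurd h hb
                · exact h
        · rintro (rfl | rfl | ⟨hb1, hb2⟩)
          · exact ⟨Or.inr (by simpa using hgS), Or.inl rfl⟩
          · exact ⟨Or.inl (by group), Or.inr hginv⟩
          · exact ⟨Or.inr hb1, Or.inr hb2⟩
      rw [hset, if_pos hgS]
      have h1not : (1 : G) ∉ insert g⁻¹ (Finset.univ.filter (fun b => g * b ∈ S ∧ b ∈ S)) := by
        simp only [Finset.mem_insert, Finset.mem_filter, Finset.mem_univ, true_and]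
        push_neg
        refine ⟨?_, fun _ h => absurd h h1⟩
        intro h; exact hg (by rw [← inv_inv g, ← h, inv_one])
      have hgnot : g⁻¹ ∉ Finset.univ.filter (fun b => g * b ∈ S ∧ b ∈ S) := by
        simp only [Finset.mem_filter, Finset.mem_univ, true_and, not_and]
        intro h; exact absurd (by simpa using h) h1
      rw [Finset.card_insert_of_notMem h1not, Finset.card_insert_of_notMem hgnot]
    · have hginv : g⁻¹ ∉ S := fun h => hgS ((hinv' g).mpr h)
      have hset : (Finset.univ.filter (fun b => g * b ∈ A ∧ b ∈ A))
          = Finset.univ.filter (fun b => g * b ∈ S ∧ b ∈ S) := by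
        apply Finset.filter_congr
        intro b _
        simp only [hA, Finset.mem_insert]
        constructor
        · rintro ⟨hb1, hb2⟩
          have hbS : b ∈ S := by
            rcases hb2 with rfl | h
            · rcases hb1 with h | h
              · exact absurd (by simpa using h) hg
              · exact absurd (by simpa using h) hgS
            · exact h
          have hgbS : g * b ∈ S := by
            rcases hb1 with h | h
            · have hb : b = g⁻¹ := (inv_eq_of_mul_eq_one_right h).symm
              exact absurd (hb ▸ hbS) hginv
            · exact h
          exact ⟨hgbS, hbS⟩
        · rintro ⟨hb1, hb2⟩
          exact ⟨Or.inr hb1, Or.inr hb2⟩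
      rw [hset, if_neg hgS]
      ring
  -- now put everything together over ℤ
  have hNS := hcount g hg
  rw [pair_count] at hNS
  have hTg : (g ∈ T) ↔ (g ∉ S) := by
    simp only [hTmem, hA, Finset.mem_insert, not_or]
    exact ⟨fun h => h.2, fun h => ⟨hg, h⟩⟩
  have hle : (Finset.univ.filter (fun b => g * b ∈ A ∨ b ∈ A)).card ≤ v := by
    rw [← hv, ← Finset.card_univ]; exact Finset.card_le_univ _
  by_cases hgS : g ∈ S
  · rw [if_pos hgS] at hNS hNA
    rw [if_neg (fun h => (hTg.mp h) hgS), ← hNS]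
    omega
  · rw [if_neg hgS] at hNS hNA
    rw [if_pos (hTg.mpr hgS), ← hNS]
    omega
end

section
/- Let Γ be a strongly regular graph admitting a group G of automorphisms acting sharply transitively on the vertices. Then for any vertex v₀, identifying the vertices with G via g ↦ g·v₀, the neighborhood of v₀ corresponds to a regular partial difference set in G. -/
/-- Let `Γ` be a strongly regular graph whose automorphism group contains a group `G`
acting sharply transitively on the vertices. Identifying the vertices with `G` via
`g ↦ g • v₀`, the neighborhood of a vertex `v₀` corresponds to a regular partial
difference set `S = {g : G | Γ.Adj v₀ (g • v₀)}` in `G` with the same parameters. -/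
theorem srg_sharply_transitive_gives_pds
    {V G : Type*} [Fintype V] [DecidableEq V]
    [Group G] [Fintype G] [DecidableEq G] [MulAction G V]
    (Γ : SimpleGraph V) [DecidableRel Γ.Adj]
    (haut : ∀ (g : G) (x y : V), Γ.Adj x y ↔ Γ.Adj (g • x) (g • y))
    (hsharp : ∀ x y : V, ∃! g : G, g • x = y)
    (v k l m : ℕ) (h : Γ.IsSRGWith v k l m) (v₀ : V) :
    IsPDS (Finset.univ.filter (fun g : G => Γ.Adj v₀ (g • v₀))) v k (l : ℤ) (m : ℤ) ∧
    (1 : G) ∉ Finset.univ.filter (fun g : G => Γ.Adj v₀ (g • v₀)) := by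
  classical
  set S := Finset.univ.filter (fun g : G => Γ.Adj v₀ (g • v₀)) with hS
  have hbij : Function.Bijective (fun g : G => g • v₀) := by
    constructor
    · intro a b hab
      obtain ⟨g, hg, hu⟩ := hsharp v₀ (a • v₀)
      exact (hu a rfl).trans (hu b hab.symm).symm
    · intro y; obtain ⟨g, hg, _⟩ := hsharp v₀ y; exact ⟨g, hg⟩
  have hmemS : ∀ g : G, g ∈ S ↔ Γ.Adj v₀ (g • v₀) := by
    intro g; simp [hS]
  have h1 : (1 : G) ∉ S := by
    rw [hmemS]; simpa using Γ.irrefl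
  refine ⟨⟨?_, ?_, ?_⟩, h1⟩
  · rw [← h.card]; exact Fintype.card_of_bijective hbij
  · rw [← h.regular v₀, ← SimpleGraph.card_neighborFinset_eq_degree]
    apply Finset.card_bij (fun g _ => g • v₀)
    · intro g hg
      rw [SimpleGraph.mem_neighborFinset]
      exact (hmemS g).mp hg
      
    · intro a _ b _ hab; exact hbij.1 hab
    · intro y hy
      obtain ⟨g, hg⟩ := hbij.2 y
      have hg' : g • v₀ = y := hg
      rw [SimpleGraph.mem_neighborFinset] at hy
      exact ⟨g, (hmemS g).mpr (by rw [hg']; exact hy), hg⟩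
  · intro g hg
    have hcard : ((S ×ˢ S).filter (fun p => p.1 * p.2⁻¹ = g)).card
        = Fintype.card (Γ.commonNeighbors v₀ (g⁻¹ • v₀)) := by
      rw [← Set.toFinset_card]
      apply Finset.card_bij (fun p _ => p.2 • v₀)
      · rintro ⟨s₁, s₂⟩ hp
        rw [Finset.mem_filter, Finset.mem_product] at hp
        obtain ⟨⟨hs₁, hs₂⟩, hp⟩ := hp
        simp only at hp
        rw [Set.mem_toFinset]
        constructor
        · exact (hmemS s₂).mp hs₂
        · have : Γ.Adj v₀ ((g * s₂) • v₀) := by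
            rw [← hp, inv_mul_cancel_right]; exact (hmemS s₁).mp hs₁
          have := (haut g⁻¹ _ _).mp this
          rw [← mul_smul, inv_mul_cancel_left] at this
          exact this
      · rintro ⟨a₁, a₂⟩ ha ⟨b₁, b₂⟩ hb hab
        rw [Finset.mem_filter] at ha hb
        have h2 : a₂ = b₂ := hbij.1 hab
        have h1' : a₁ = b₁ := by
          have := ha.2.trans hb.2.symm
          simp only at this
          rw [h2] at this
          exact mul_right_cancel this
        simp [h1', h2]
      · intro w hw
        rw [Set.mem_toFinset] at hw
        obtain ⟨hw1, hw2⟩ := hw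
        obtain ⟨x, hx0⟩ := hbij.2 w
        have hx : x • v₀ = w := hx0
        refine ⟨(g * x, x), ?_, hx⟩
        rw [Finset.mem_filter, Finset.mem_product]
        refine ⟨⟨?_, (hmemS x).mpr (by rw [hx]; exact hw1)⟩, by simp⟩
        rw [hmemS]
        have : Γ.Adj (g⁻¹ • v₀) (x • v₀) := by rw [hx]; exact hw2
        have := (haut g _ _).mp this
        rwa [smul_inv_smul, ← mul_smul] at this
    rw [hcard]
    have hv0ne : v₀ ≠ g⁻¹ • v₀ := by
      intro he
      obtain ⟨u, _, hu⟩ := hsharp v₀ v₀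
      exact hg (inv_eq_one.mp ((hu g⁻¹ he.symm).trans (hu 1 (one_smul _ _)).symm))
    have hadj : g ∈ S ↔ Γ.Adj v₀ (g⁻¹ • v₀) := by
      rw [hmemS]
      constructor
      · intro ha
        have := (haut g⁻¹ _ _).mp ha
        rw [inv_smul_smul] at this
        exact this.symm
      · intro ha
        have := (haut g _ _).mp ha.symm
        rwa [smul_inv_smul] at this
    by_cases hgS : g ∈ S
    · rw [if_pos hgS, h.of_adj v₀ _ (hadj.mp hgS)]
    · rw [if_neg hgS, h.of_not_adj hv0ne (fun hc => hgS (hadj.mpr hc))]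
end

section
/- Let S be a subset of an abelian group G and suppose every complex character χ of G satisfies χ(S) ∈ {k, r, s} where k = |S| is attained exactly by the trivial character, r > 0 > s are integers. Then S is a (v, k, λ, μ) partial difference set with λ − μ = r + s and k − μ = −rs. -/
/-- A homomorphism from a finite commutative group to `ℂ` that is not identically `1`
sums to zero over the group. -/
lemma aux_sum_hom_eq_zero {H : Type*} [CommGroup H] [Fintype H] (F : H →* ℂ)
    (h : ∃ x, F x ≠ 1) : ∑ x : H, F x = 0 := by
  obtain ⟨x, hx⟩ := h
  have h2 : F x * ∑ y : H, F y = ∑ y : H, F y := by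
    rw [Finset.mul_sum]
    exact Fintype.sum_equiv (Equiv.mulLeft x) _ _ (fun y => by simp [map_mul])
  have := sub_eq_zero.mpr h2
  rw [← sub_one_mul] at this
  rcases mul_eq_zero.mp this with h | h
  · exact absurd (sub_eq_zero.mp h) hx
  · exact h

/-- The evaluation of characters at a point, as a monoid hom on the dual group. -/
def auxEvalHom {G : Type*} [CommGroup G] (a : G) : (G →* ℂˣ) →* ℂ where
  toFun φ := (φ a : ℂ)
  map_one' := by simp
  map_mul' φ ψ := by simp

/-- Let `S` be a subset of a finite abelian group `G` of order `v`, with `1 ∉ S`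
and `S = S⁻¹`, such that every complex character `χ` of `G` satisfies
`χ(S) ∈ {k, r, s}` where `k = |S|` is attained exactly by the trivial character
and `r > 0 > s` are integers.  Then `S` is a `(v,k,λ,μ)` partial difference set
with `λ − μ = r + s` and `k − μ = −rs`. -/
theorem three_character_values_gives_pds
    {G : Type*} [CommGroup G] [Fintype G] [DecidableEq G]
    (S : Finset G) (v k : ℕ) (r s : ℤ) (hr : r > 0) (hs : s < 0)
    (hcard : Fintype.card G = v) (hk : S.card = k)
    (h1 : (1 : G) ∉ S) (hinv : ∀ g ∈ S, g⁻¹ ∈ S)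
    (hvals : ∀ χ : G →* ℂ,
      ∑ g ∈ S, χ g = (k : ℂ) ∨ ∑ g ∈ S, χ g = (r : ℂ) ∨ ∑ g ∈ S, χ g = (s : ℂ))
    (htriv : ∀ χ : G →* ℂ, ∑ g ∈ S, χ g = (k : ℂ) ↔ χ = 1) :
    ∃ l m : ℤ, IsPDS S v k l m ∧ l - m = r + s ∧ (k : ℤ) - m = -(r * s) := by
  classical
  refine ⟨(k : ℤ) + r * s + r + s, (k : ℤ) + r * s, ⟨hcard, hk, ?_⟩, by ring, by ring⟩
  -- set up the dual group
  haveI : NeZero ((Monoid.exponent G : ℂ)) :=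
    ⟨Nat.cast_ne_zero.mpr Monoid.exponent_ne_zero_of_finite⟩
  obtain ⟨e⟩ := CommGroup.monoidHom_mulEquiv_of_hasEnoughRootsOfUnity G ℂ
  letI : Fintype (G →* ℂˣ) := Fintype.ofEquiv G e.symm.toEquiv
  have hΦcard : Fintype.card (G →* ℂˣ) = v := by
    rw [Fintype.card_congr e.toEquiv, hcard]
  have hv1 : 1 ≤ v := hcard ▸ Fintype.card_pos
  set N : G → ℤ := fun g => (((S ×ˢ S).filter (fun p => p.1 * p.2⁻¹ = g)).card : ℤ) with hN
  set M : G → ℤ := fun g => if g = 1 then (k : ℤ)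
    else if g ∈ S then (k : ℤ) + r * s + r + s else (k : ℤ) + r * s with hM
  set c : (G →* ℂˣ) → ℂ := fun φ => ∑ g ∈ S, (φ g : ℂ) with hc
  have hiff : ∀ a b : G, a * b = 1 ↔ b = a⁻¹ := by
    intro a b
    rw [eq_inv_iff_mul_eq_one, mul_comm]
  -- basic facts about character sums over S
  have hchi1 : ∀ φ : G →* ℂˣ, φ ≠ 1 → (Units.coeHom ℂ).comp φ ≠ 1 := by
    intro φ hφ hcontra
    apply hφ
    ext g
    have h2 : ((φ g : ℂ)) = 1 := by
      have := congrArg (fun χ : G →* ℂ => χ g) hcontra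
      simpa using this
    simpa using h2
  have hc_vals : ∀ φ : G →* ℂˣ, φ ≠ 1 → (c φ = (r : ℂ) ∨ c φ = (s : ℂ)) := by
    intro φ hφ
    have hsum : ∑ g ∈ S, ((Units.coeHom ℂ).comp φ) g = c φ := rfl
    rcases hvals ((Units.coeHom ℂ).comp φ) with h | h | h
    · exact absurd ((htriv _).mp h) (hchi1 φ hφ)
    · exact Or.inl (hsum ▸ h)
    · exact Or.inr (hsum ▸ h)
  have hc_one : c 1 = (k : ℂ) := by simp [hc, hk]
  -- first orthogonality
  have hA : ∀ φ : G →* ℂˣ, φ ≠ 1 → ∑ g : G, (φ g : ℂ) = 0 := by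
    intro φ hφ
    refine aux_sum_hom_eq_zero ((Units.coeHom ℂ).comp φ) ?_
    by_contra hcon
    push_neg at hcon
    exact hchi1 φ hφ (by ext g; simpa using hcon g)
  -- second orthogonality
  have hB : ∀ a : G, ∑ φ : G →* ℂˣ, (φ a : ℂ) = if a = 1 then (v : ℂ) else 0 := by
    intro a
    by_cases ha : a = 1
    · simp [ha, Finset.card_univ, hΦcard]
    · rw [if_neg ha]
      refine aux_sum_hom_eq_zero (auxEvalHom a) ?_
      obtain ⟨ψ, hψ⟩ := CommGroup.exists_apply_ne_one_of_hasEnoughRootsOfUnity G ℂ ha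
      exact ⟨ψ, fun h => hψ (Units.ext ((show ((ψ a : ℂ)) = 1 from h).trans Units.val_one.symm))⟩
  -- symmetry of S
  have hsymm : ∀ φ : G →* ℂˣ, ∑ b ∈ S, ((φ b⁻¹ : ℂ)) = c φ := by
    intro φ
    exact Finset.sum_nbij' (fun b => b⁻¹) (fun b => b⁻¹) (fun b hb => hinv b hb)
      (fun b hb => hinv b hb) (fun b _ => inv_inv b) (fun b _ => inv_inv b) (fun b _ => rfl)
  -- Fourier transform of N
  have hstep1 : ∀ φ : G →* ℂˣ, ∑ g : G, (N g : ℂ) * (φ g : ℂ) = (c φ) ^ 2 := by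
    intro φ
    have h0 : ∀ g : G, (N g : ℂ) * (φ g : ℂ)
        = ∑ p ∈ (S ×ˢ S).filter (fun p => p.1 * p.2⁻¹ = g), ((φ g : ℂ)) := by
      intro g
      rw [Finset.sum_const, nsmul_eq_mul, hN]
      push_cast
      ring
    rw [Finset.sum_congr rfl fun g _ => h0 g,
      Finset.sum_fiberwise' (S ×ˢ S) (fun p => p.1 * p.2⁻¹) (fun g => (φ g : ℂ)),
      Finset.sum_product]
    calc ∑ a ∈ S, ∑ b ∈ S, ((φ (a * b⁻¹) : ℂ))
        = ∑ a ∈ S, ∑ b ∈ S, (φ a : ℂ) * (φ b⁻¹ : ℂ) := by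
          refine Finset.sum_congr rfl fun a _ => Finset.sum_congr rfl fun b _ => ?_
          rw [map_mul]; push_cast; ring
      _ = (∑ a ∈ S, (φ a : ℂ)) * (∑ b ∈ S, (φ b⁻¹ : ℂ)) := (Finset.sum_mul_sum _ _ _ _).symm
      _ = (c φ) ^ 2 := by rw [hsymm φ]; rw [hc]; ring
  -- the global counting identity
  have hglobal : (k : ℂ) ^ 2
      = (v : ℂ) * k + ((r : ℂ) + s) * k + (r : ℂ) * s * ((v : ℂ) - 1) := by
    have E1 : ∑ φ : G →* ℂˣ, c φ = 0 := by
      rw [hc]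
      rw [Finset.sum_comm]
      refine Finset.sum_eq_zero fun g hg => ?_
      rw [hB g, if_neg (by rintro rfl; exact h1 hg)]
    have E2 : ∑ φ : G →* ℂˣ, (c φ) ^ 2 = (v : ℂ) * k := by
      have hsq : ∀ φ : G →* ℂˣ, (c φ) ^ 2 = ∑ a ∈ S, ∑ b ∈ S, ((φ (a * b) : ℂ)) := by
        intro φ
        rw [hc, sq, Finset.sum_mul_sum]
        refine Finset.sum_congr rfl fun a _ => Finset.sum_congr rfl fun b _ => ?_
        rw [map_mul]; push_cast; ring
      calc ∑ φ : G →* ℂˣ, (c φ) ^ 2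
          = ∑ φ : G →* ℂˣ, ∑ a ∈ S, ∑ b ∈ S, ((φ (a * b) : ℂ)) :=
            Finset.sum_congr rfl fun φ _ => hsq φ
        _ = ∑ a ∈ S, ∑ b ∈ S, ∑ φ : G →* ℂˣ, ((φ (a * b) : ℂ)) := by
            rw [Finset.sum_comm]
            exact Finset.sum_congr rfl fun a _ => Finset.sum_comm
        _ = ∑ a ∈ S, ∑ b ∈ S, if b = a⁻¹ then (v : ℂ) else 0 := by
            refine Finset.sum_congr rfl fun a _ => Finset.sum_congr rfl fun b _ => ?_
            rw [hB (a * b)]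
            simp only [hiff a b]
        _ = ∑ a ∈ S, (v : ℂ) := by
            refine Finset.sum_congr rfl fun a ha => ?_
            rw [Finset.sum_ite_eq' S a⁻¹ (fun _ => (v : ℂ)), if_pos (hinv a ha)]
        _ = (v : ℂ) * k := by rw [Finset.sum_const, hk, nsmul_eq_mul]; ring
    set T : Finset (G →* ℂˣ) := Finset.univ.erase 1 with hT
    have hsplit : ∀ f : (G →* ℂˣ) → ℂ,
        ∑ φ : G →* ℂˣ, f φ = f 1 + ∑ φ ∈ T, f φ := by
      intro f
      rw [hT, Finset.add_sum_erase _ f (Finset.mem_univ 1)]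
    set A : Finset (G →* ℂˣ) := T.filter (fun φ => c φ = (r : ℂ)) with hA2
    set B : Finset (G →* ℂˣ) := T.filter (fun φ => c φ = (s : ℂ)) with hB2
    have hrs : (r : ℂ) ≠ (s : ℂ) := by
      intro h
      have : r = s := by exact_mod_cast h
      omega
    have hdisj : Disjoint A B := by
      rw [Finset.disjoint_left]
      intro φ hφA hφB
      rw [hA2, Finset.mem_filter] at hφA
      rw [hB2, Finset.mem_filter] at hφB
      exact hrs (hφA.2 ▸ hφB.2)
    have hunion : A ∪ B = T := by
      ext φ
      simp only [hA2, hB2, Finset.mem_union, Finset.mem_filter]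
      constructor
      · rintro (⟨h, _⟩ | ⟨h, _⟩) <;> exact h
      · intro h
        rcases hc_vals φ (Finset.mem_erase.mp h).1 with hv | hv
        · exact Or.inl ⟨h, hv⟩
        · exact Or.inr ⟨h, hv⟩
    have hcardAB : (A.card : ℂ) + (B.card : ℂ) = (v : ℂ) - 1 := by
      have hn : A.card + B.card = v - 1 := by
        rw [← Finset.card_union_of_disjoint hdisj, hunion, hT,
          Finset.card_erase_of_mem (Finset.mem_univ 1), Finset.card_univ, hΦcard]
      have := congrArg (Nat.cast : ℕ → ℂ) hn
      rw [Nat.cast_add, Nat.cast_sub hv1] at this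
      simpa using this
    have hsumA : ∀ n : ℕ, ∑ φ ∈ A, (c φ) ^ n = (A.card : ℂ) * (r : ℂ) ^ n := by
      intro n
      have hcong : ∀ φ ∈ A, (c φ) ^ n = (r : ℂ) ^ n := by
        intro φ hφ
        rw [hA2, Finset.mem_filter] at hφ
        rw [hφ.2]
      rw [Finset.sum_congr rfl hcong, Finset.sum_const, nsmul_eq_mul]
    have hsumB : ∀ n : ℕ, ∑ φ ∈ B, (c φ) ^ n = (B.card : ℂ) * (s : ℂ) ^ n := by
      intro n
      have hcong : ∀ φ ∈ B, (c φ) ^ n = (s : ℂ) ^ n := by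
        intro φ hφ
        rw [hB2, Finset.mem_filter] at hφ
        rw [hφ.2]
      rw [Finset.sum_congr rfl hcong, Finset.sum_const, nsmul_eq_mul]
    have hTsum : ∀ n : ℕ, ∑ φ ∈ T, (c φ) ^ n
        = (A.card : ℂ) * (r : ℂ) ^ n + (B.card : ℂ) * (s : ℂ) ^ n := by
      intro n
      rw [← hunion, Finset.sum_union hdisj, hsumA n, hsumB n]
    have hE1' : (k : ℂ) + ((A.card : ℂ) * (r : ℂ) + (B.card : ℂ) * (s : ℂ)) = 0 := by
      have hT1 : ∑ φ ∈ T, c φ = (A.card : ℂ) * (r : ℂ) + (B.card : ℂ) * (s : ℂ) := by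
        simpa using hTsum 1
      have h0 := hsplit c
      rw [E1, hc_one, hT1] at h0
      linear_combination -h0
    have hE2' : (k : ℂ) ^ 2 + ((A.card : ℂ) * (r : ℂ) ^ 2 + (B.card : ℂ) * (s : ℂ) ^ 2)
        = (v : ℂ) * k := by
      have h0 := hsplit (fun φ => (c φ) ^ 2)
      rw [E2, hc_one, hTsum 2] at h0
      linear_combination -h0
    linear_combination hE2' - ((r : ℂ) + (s : ℂ)) * hE1' + (r : ℂ) * (s : ℂ) * hcardAB
  -- Fourier transform of M
  have hstep2 : ∀ φ : G →* ℂˣ, ∑ g : G, (M g : ℂ) * (φ g : ℂ) = (c φ) ^ 2 := by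
    intro φ
    have hMsplit : ∀ g : G, (M g : ℂ)
        = ((k : ℂ) + (r : ℂ) * s) + (if g = 1 then -((r : ℂ) * s) else 0)
          + (if g ∈ S then (r : ℂ) + s else 0) := by
      intro g
      rw [hM]
      by_cases hg1 : g = 1
      · subst hg1
        simp only [if_pos rfl, if_neg h1]
        push_cast
        ring
      · by_cases hgS : g ∈ S
        · simp only [if_neg hg1, if_pos hgS]
          push_cast
          ring
        · simp only [if_neg hg1, if_neg hgS]
          push_cast
          ring
    have hsum0 : ∑ g : G, (M g : ℂ) * (φ g : ℂ)
        = ((k : ℂ) + (r : ℂ) * s) * (∑ g : G, (φ g : ℂ))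
          + (-((r : ℂ) * s)) * (φ (1 : G) : ℂ) + ((r : ℂ) + s) * c φ := by
      rw [Finset.sum_congr rfl (fun g _ => by rw [hMsplit g, add_mul, add_mul]),
        Finset.sum_add_distrib, Finset.sum_add_distrib, ← Finset.mul_sum]
      congr 1
      · congr 1
        simp only [ite_mul, zero_mul]
        rw [Finset.sum_ite_eq' Finset.univ (1 : G) (fun g => -((r : ℂ) * s) * (φ g : ℂ)),
          if_pos (Finset.mem_univ 1)]
      · simp only [ite_mul, zero_mul]
        rw [← Finset.sum_filter, Finset.filter_mem_eq_inter, Finset.univ_inter,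
          Finset.mul_sum]
    rw [hsum0, map_one]
    by_cases hφ : φ = 1
    · subst hφ
      rw [hc_one]
      have : ∑ g : G, ((1 : G →* ℂˣ) g : ℂ) = (v : ℂ) := by
        simp [Finset.card_univ, hcard]
      rw [this]
      simp only [MonoidHom.one_apply, Units.val_one]
      linear_combination -hglobal
    · rw [hA φ hφ]
      rcases hc_vals φ hφ with h | h <;> rw [h] <;> simp only [Units.val_one] <;> ring
  -- Fourier inversion: N = M
  have hNM : ∀ g : G, N g = M g := by
    have hd : ∀ φ : G →* ℂˣ, ∑ g : G, ((N g - M g : ℤ) : ℂ) * (φ g : ℂ) = 0 := by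
      intro φ
      have : ∀ g : G, ((N g - M g : ℤ) : ℂ) * (φ g : ℂ)
          = (N g : ℂ) * (φ g : ℂ) - (M g : ℂ) * (φ g : ℂ) := by
        intro g; push_cast; ring
      rw [Finset.sum_congr rfl fun g _ => this g, Finset.sum_sub_distrib,
        hstep1 φ, hstep2 φ, sub_self]
    intro h
    have key : ∑ φ : G →* ℂˣ, (∑ g : G, ((N g - M g : ℤ) : ℂ) * (φ g : ℂ)) * (φ h⁻¹ : ℂ)
        = ((N h - M h : ℤ) : ℂ) * (v : ℂ) := by
      calc ∑ φ : G →* ℂˣ, (∑ g : G, ((N g - M g : ℤ) : ℂ) * (φ g : ℂ)) * (φ h⁻¹ : ℂ)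
          = ∑ φ : G →* ℂˣ, ∑ g : G, ((N g - M g : ℤ) : ℂ) * (φ (g * h⁻¹) : ℂ) := by
            refine Finset.sum_congr rfl fun φ _ => ?_
            rw [Finset.sum_mul]
            refine Finset.sum_congr rfl fun g _ => ?_
            rw [map_mul]; push_cast; ring
        _ = ∑ g : G, ((N g - M g : ℤ) : ℂ) * ∑ φ : G →* ℂˣ, (φ (g * h⁻¹) : ℂ) := by
            rw [Finset.sum_comm]
            exact Finset.sum_congr rfl fun g _ => (Finset.mul_sum _ _ _).symm
        _ = ∑ g : G, ((N g - M g : ℤ) : ℂ) * (if g = h then (v : ℂ) else 0) := by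
            refine Finset.sum_congr rfl fun g _ => ?_
            rw [hB (g * h⁻¹)]
            simp only [mul_inv_eq_one]
        _ = ∑ g : G, (if g = h then ((N g - M g : ℤ) : ℂ) * (v : ℂ) else 0) := by
            refine Finset.sum_congr rfl fun g _ => ?_
            by_cases hgh : g = h <;> simp [hgh]
        _ = ((N h - M h : ℤ) : ℂ) * (v : ℂ) := by
            rw [Finset.sum_ite_eq' Finset.univ h
              (fun g => ((N g - M g : ℤ) : ℂ) * (v : ℂ)), if_pos (Finset.mem_univ h)]
    rw [Finset.sum_congr rfl (fun φ _ => by rw [hd φ, zero_mul]), Finset.sum_const,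
      smul_zero] at key
    have hvne : ((v : ℂ)) ≠ 0 := by
      simp only [ne_eq, Nat.cast_eq_zero]
      omega
    have : ((N h - M h : ℤ) : ℂ) = 0 := by
      rcases mul_eq_zero.mp key.symm with h' | h'
      · exact h'
      · exact absurd h' hvne
    have : (N h - M h : ℤ) = 0 := by exact_mod_cast this
    omega
  -- conclusion
  intro g hg
  have h := hNM g
  simp only [hN, hM, if_neg hg] at h
  exact h
end
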